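/- Let d ≥ 5 and let δ be an integer with 2 ≤ δ ≤ d − δ; set m = d − δ. Consider B = O[u,v,S,T]/(uv − π, uS + vT) and the ring R_V = O[u, v, x₁, …, x_m, y₁, …, y_δ] / (uv − π, u·Q_m(x₁,…,x_m) + v·Q_δ(y₁,…,y_δ), x₁ − 1, y₁ − 1). Then the assignment u ↦ u, v ↦ v, S ↦ Q_m(x₁,…,x_m), T ↦ Q_δ(y₁,…,y_δ) defines a well-defined O-algebra homomorphism B → R_V, and this homomorphism is smooth (formally smooth and of finite presentation). -/

import Mathlib

open MvPolynomial

noncomputable section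

/-- The ideal `(uv - π, uS + vT)` of `O[u,v,S,T]`, with variables
`u = X 0`, `v = X 1`, `S = X 2`, `T = X 3`. -/
def idealB (O : Type*) [CommRing O] (π : O) : Ideal (MvPolynomial (Fin 4) O) :=
  Ideal.span {X 0 * X 1 - C π, X 0 * X 2 + X 1 * X 3}

/-- The ideal `(uv - π, u·Q_m(x₁,…,x_m) + v·Q_δ(y₁,…,y_δ), x₁ - 1, y₁ - 1)` of
`O[u, v, x₁, …, x_m, y₁, …, y_δ]`, where `Q_n(a₁,…,a_n) = Σ_{i=1}^{n} a_i·a_{n+1-i}` is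
the split quadratic form. The variables are indexed by `Fin 2 ⊕ Fin m ⊕ Fin δ`, with
`u = X (inl 0)`, `v = X (inl 1)`, `x_{j+1} = X (inr (inl j))`, `y_{i+1} = X (inr (inr i))`. -/
def idealRV (O : Type*) [CommRing O] (π : O) (m δ : ℕ) (hm : 0 < m) (hδ : 0 < δ) :
    Ideal (MvPolynomial (Fin 2 ⊕ Fin m ⊕ Fin δ) O) :=
  Ideal.span
    { X (Sum.inl 0) * X (Sum.inl 1) - C π,
      X (Sum.inl 0) * (∑ j : Fin m, X (Sum.inr (Sum.inl j)) * X (Sum.inr (Sum.inl j.rev))) +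
        X (Sum.inl 1) * (∑ i : Fin δ, X (Sum.inr (Sum.inr i)) * X (Sum.inr (Sum.inr i.rev))),
      X (Sum.inr (Sum.inl ⟨0, hm⟩)) - 1,
      X (Sum.inr (Sum.inr ⟨0, hδ⟩)) - 1 }

lemma key_sum {R : Type*} [CommRing R] (m : ℕ) (hm : 2 ≤ m) (a : Fin m → R) :
    ∑ j : Fin m, a j * a j.rev =
      2 * (a ⟨0, by omega⟩ * a ⟨m - 1, by omega⟩) +
      ∑ t : Fin (m - 2), a ⟨t.val + 1, by omega⟩ * a ⟨m - 2 - t.val, by omega⟩ := by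
  obtain ⟨k, rfl⟩ : ∃ k, m = k + 2 := ⟨m - 2, by omega⟩
  show ∑ j : Fin (k+2), a j * a j.rev =
      2 * (a ⟨0, by omega⟩ * a ⟨k + 1, by omega⟩) +
      ∑ t : Fin k, a ⟨t.val + 1, by omega⟩ * a ⟨k - t.val, by omega⟩
  have hrev : ∀ (j : ℕ) (h : j < k + 2), Fin.rev ⟨j, h⟩ = ⟨k + 1 - j, by omega⟩ := by
    intro j h
    apply Fin.ext
    rw [Fin.val_rev]
    simp
  rw [Fin.sum_univ_succ, Fin.sum_univ_castSucc]
  have esum : ∑ i : Fin k, a i.castSucc.succ * a (i.castSucc.succ).rev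
      = ∑ t : Fin k, a ⟨t.val + 1, by omega⟩ * a ⟨k - t.val, by omega⟩ := by
    refine Finset.sum_congr rfl fun i _ => ?_
    have h1 : (i.castSucc.succ : Fin (k+2)) = ⟨i.val + 1, by omega⟩ := by
      apply Fin.ext; simp
    have h2 : (⟨k + 1 - (i.val + 1), by omega⟩ : Fin (k+2)) = ⟨k - i.val, by omega⟩ := by
      apply Fin.ext; simp
    rw [h1, hrev, h2]
  have e0 : ((0 : Fin (k+2))) = ⟨0, by omega⟩ := rfl
  have e1 : ((Fin.last k).succ : Fin (k+2)) = ⟨k+1, by omega⟩ := by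
    apply Fin.ext; simp
  rw [esum, e0, e1, hrev, hrev]
  have h3 : (⟨k + 1 - 0, by omega⟩ : Fin (k+2)) = ⟨k + 1, by omega⟩ := by
    apply Fin.ext; simp
  have h4 : (⟨k + 1 - (k + 1), by omega⟩ : Fin (k+2)) = ⟨0, by omega⟩ := by
    apply Fin.ext; simp
  rw [h3, h4]
  ring

section Aux

variable (O : Type*) [CommRing O] [Invertible (2 : O)] (π : O) (m δ : ℕ)

/-- The image of `x_{j+1}` in `W`. -/
def fxW : Fin m → MvPolynomial (Fin (m - 2) ⊕ Fin (δ - 2)) (MvPolynomial (Fin 4) O ⧸ idealB O π) :=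
  fun j =>
  if h0 : j.val = 0 then 1
  else if h1 : j.val = m - 1 then
    algebraMap O _ (⅟(2 : O)) *
      (C (Ideal.Quotient.mk (idealB O π) (X 2)) -
        ∑ t : Fin (m - 2), X (Sum.inl t) * X (Sum.inl t.rev))
  else X (Sum.inl ⟨j.val - 1, by omega⟩)

/-- The image of `y_{i+1}` in `W`. -/
def fyW : Fin δ → MvPolynomial (Fin (m - 2) ⊕ Fin (δ - 2)) (MvPolynomial (Fin 4) O ⧸ idealB O π) :=
  fun j =>
  if h0 : j.val = 0 then 1
  else if h1 : j.val = δ - 1 then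
    algebraMap O _ (⅟(2 : O)) *
      (C (Ideal.Quotient.mk (idealB O π) (X 3)) -
        ∑ t : Fin (δ - 2), X (Sum.inr t) * X (Sum.inr t.rev))
  else X (Sum.inr ⟨j.val - 1, by omega⟩)

/-- The variable assignment for the map `O[u,v,x,y] → W`. -/
def genW : Fin 2 ⊕ Fin m ⊕ Fin δ →
    MvPolynomial (Fin (m - 2) ⊕ Fin (δ - 2)) (MvPolynomial (Fin 4) O ⧸ idealB O π) :=
  Sum.elim (fun i => C (Ideal.Quotient.mk (idealB O π) (X ⟨i.val, by omega⟩)))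
    (Sum.elim (fxW O π m δ) (fyW O π m δ))

lemma fxW_zero (h : 0 < m) : fxW O π m δ ⟨0, h⟩ = 1 := by
  simp [fxW]

lemma fxW_last (h : m - 1 < m) (hm2 : 2 ≤ m) :
    fxW O π m δ ⟨m - 1, h⟩ =
      algebraMap O _ (⅟(2 : O)) *
        (C (Ideal.Quotient.mk (idealB O π) (X 2)) -
          ∑ t : Fin (m - 2), X (Sum.inl t) * X (Sum.inl t.rev)) := by
  simp only [fxW]
  rw [dif_neg (by omega)]
  simp

lemma fxW_mid (j : ℕ) (h : j < m) (h0 : j ≠ 0) (h1 : j ≠ m - 1) :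
    fxW O π m δ ⟨j, h⟩ = X (Sum.inl ⟨j - 1, by omega⟩) := by
  simp only [fxW]
  rw [dif_neg h0, dif_neg h1]

lemma fyW_zero (h : 0 < δ) : fyW O π m δ ⟨0, h⟩ = 1 := by
  simp [fyW]

lemma fyW_last (h : δ - 1 < δ) (hδ2 : 2 ≤ δ) :
    fyW O π m δ ⟨δ - 1, h⟩ =
      algebraMap O _ (⅟(2 : O)) *
        (C (Ideal.Quotient.mk (idealB O π) (X 3)) -
          ∑ t : Fin (δ - 2), X (Sum.inr t) * X (Sum.inr t.rev)) := by
  simp only [fyW]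
  rw [dif_neg (by omega)]
  simp

lemma fyW_mid (j : ℕ) (h : j < δ) (h0 : j ≠ 0) (h1 : j ≠ δ - 1) :
    fyW O π m δ ⟨j, h⟩ = X (Sum.inr ⟨j - 1, by omega⟩) := by
  simp only [fyW]
  rw [dif_neg h0, dif_neg h1]

lemma two_invOf_W :
    (2 : MvPolynomial (Fin (m - 2) ⊕ Fin (δ - 2)) (MvPolynomial (Fin 4) O ⧸ idealB O π)) *
      algebraMap O _ (⅟(2 : O)) = 1 := by
  rw [← map_ofNat (algebraMap O (MvPolynomial (Fin (m - 2) ⊕ Fin (δ - 2))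
    (MvPolynomial (Fin 4) O ⧸ idealB O π))) 2, ← map_mul, mul_invOf_self, map_one]

variable (hm : 2 ≤ m) (hδ : 2 ≤ δ)

/-- The quadratic form `Q_m` in the `x` variables. -/
def QxP : MvPolynomial (Fin 2 ⊕ Fin m ⊕ Fin δ) O :=
  ∑ j : Fin m, X (Sum.inr (Sum.inl j)) * X (Sum.inr (Sum.inl j.rev))

/-- The quadratic form `Q_δ` in the `y` variables. -/
def QyP : MvPolynomial (Fin 2 ⊕ Fin m ⊕ Fin δ) O :=
  ∑ i : Fin δ, X (Sum.inr (Sum.inr i)) * X (Sum.inr (Sum.inr i.rev))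

/-- Abbreviation for the big ideal. -/
abbrev IRV : Ideal (MvPolynomial (Fin 2 ⊕ Fin m ⊕ Fin δ) O) :=
  idealRV O π m δ (by omega) (Nat.lt_of_lt_of_le (by decide) hδ)

/-- Abbreviation for `R_V`. -/
abbrev RVq : Type _ := MvPolynomial (Fin 2 ⊕ Fin m ⊕ Fin δ) O ⧸ IRV O π m δ hm hδ

/-- Abbreviation for `B`. -/
abbrev Bq : Type _ := MvPolynomial (Fin 4) O ⧸ idealB O π

/-- Abbreviation for the polynomial ring `W = B[free variables]`. -/
abbrev Wq : Type _ := MvPolynomial (Fin (m - 2) ⊕ Fin (δ - 2)) (Bq O π)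

/-- The images of `u, v, S, T` in `R_V`. -/
def genB : Fin 4 → RVq O π m δ hm hδ :=
  ![Ideal.Quotient.mk _ (X (Sum.inl 0)), Ideal.Quotient.mk _ (X (Sum.inl 1)),
    Ideal.Quotient.mk _ (QxP O m δ), Ideal.Quotient.mk _ (QyP O m δ)]

lemma mem_IRV_1 : (X (Sum.inl 0) * X (Sum.inl 1) - C π : MvPolynomial (Fin 2 ⊕ Fin m ⊕ Fin δ) O)
    ∈ IRV O π m δ hm hδ :=
  Ideal.subset_span (Set.mem_insert _ _)

lemma mem_IRV_2 : (X (Sum.inl 0) * QxP O m δ + X (Sum.inl 1) * QyP O m δ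
    : MvPolynomial (Fin 2 ⊕ Fin m ⊕ Fin δ) O) ∈ IRV O π m δ hm hδ :=
  Ideal.subset_span (Set.mem_insert_of_mem _ (Set.mem_insert _ _))

lemma mem_IRV_3 : (X (Sum.inr (Sum.inl ⟨0, by omega⟩)) - 1
    : MvPolynomial (Fin 2 ⊕ Fin m ⊕ Fin δ) O) ∈ IRV O π m δ hm hδ :=
  Ideal.subset_span (Set.mem_insert_of_mem _ (Set.mem_insert_of_mem _ (Set.mem_insert _ _)))

lemma mem_IRV_4 : (X (Sum.inr (Sum.inr ⟨0, Nat.lt_of_lt_of_le (by decide) hδ⟩)) - 1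
    : MvPolynomial (Fin 2 ⊕ Fin m ⊕ Fin δ) O) ∈ IRV O π m δ hm hδ :=
  Ideal.subset_span (Set.mem_insert_of_mem _ (Set.mem_insert_of_mem _
    (Set.mem_insert_of_mem _ (Set.mem_singleton _))))

lemma idealB_le_ker :
    idealB O π ≤ RingHom.ker (MvPolynomial.aeval (genB O π m δ hm hδ)).toRingHom := by
  rw [idealB, Ideal.span_le]
  rintro q hq
  simp only [Set.mem_insert_iff, Set.mem_singleton_iff] at hq
  have hmk : ∀ r : MvPolynomial (Fin 2 ⊕ Fin m ⊕ Fin δ) O,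
      r ∈ IRV O π m δ hm hδ → Ideal.Quotient.mk (IRV O π m δ hm hδ) r = 0 :=
    fun r hr => Ideal.Quotient.eq_zero_iff_mem.mpr hr
  rcases hq with rfl | rfl <;>
    simp only [SetLike.mem_coe, RingHom.mem_ker, AlgHom.toRingHom_eq_coe, RingHom.coe_coe,
      map_sub, map_add, map_mul, aeval_X, aeval_C, genB]
  · have := hmk _ (mem_IRV_1 O π m δ hm hδ)
    rw [map_sub, map_mul] at this
    exact this
  · have := hmk _ (mem_IRV_2 O π m δ hm hδ)
    rw [map_add, map_mul, map_mul] at this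
    simpa [Matrix.cons_val_zero, Matrix.cons_val_one] using this

/-- The algebra map `f : B → R_V`. -/
def fHom : Bq O π →ₐ[O] RVq O π m δ hm hδ :=
  Ideal.Quotient.liftₐ (idealB O π) (MvPolynomial.aeval (genB O π m δ hm hδ))
    (fun a ha => idealB_le_ker O π m δ hm hδ ha)

lemma fHom_mk (p : MvPolynomial (Fin 4) O) :
    fHom O π m δ hm hδ (Ideal.Quotient.mk _ p) = MvPolynomial.aeval (genB O π m δ hm hδ) p := by
  simp [fHom, Ideal.Quotient.liftₐ_apply]
  rfl

set_option linter.unusedSectionVars false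

lemma mk_x1 :
    Ideal.Quotient.mk (IRV O π m δ hm hδ) (X (Sum.inr (Sum.inl ⟨0, by omega⟩))) = 1 := by
  have h := Ideal.Quotient.eq_zero_iff_mem.mpr (mem_IRV_3 O π m δ hm hδ)
  rwa [map_sub, map_one, sub_eq_zero] at h

lemma mk_y1 :
    Ideal.Quotient.mk (IRV O π m δ hm hδ) (X (Sum.inr (Sum.inr ⟨0, Nat.lt_of_lt_of_le (by decide) hδ⟩))) = 1 := by
  have h := Ideal.Quotient.eq_zero_iff_mem.mpr (mem_IRV_4 O π m δ hm hδ)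
  rwa [map_sub, map_one, sub_eq_zero] at h

lemma mk_Qx :
    Ideal.Quotient.mk (IRV O π m δ hm hδ) (QxP O m δ) =
      2 * Ideal.Quotient.mk (IRV O π m δ hm hδ) (X (Sum.inr (Sum.inl ⟨m - 1, by omega⟩))) +
      ∑ t : Fin (m - 2),
        Ideal.Quotient.mk (IRV O π m δ hm hδ) (X (Sum.inr (Sum.inl ⟨t.val + 1, by omega⟩))) *
        Ideal.Quotient.mk (IRV O π m δ hm hδ)
          (X (Sum.inr (Sum.inl ⟨m - 2 - t.val, by omega⟩))) := by
  have h := key_sum m hm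
    (fun j => Ideal.Quotient.mk (IRV O π m δ hm hδ) (X (Sum.inr (Sum.inl j))))
  rw [mk_x1 O π m δ hm hδ, one_mul] at h
  calc Ideal.Quotient.mk (IRV O π m δ hm hδ) (QxP O m δ)
      = ∑ j : Fin m, Ideal.Quotient.mk (IRV O π m δ hm hδ) (X (Sum.inr (Sum.inl j))) *
          Ideal.Quotient.mk (IRV O π m δ hm hδ) (X (Sum.inr (Sum.inl j.rev))) := by
        rw [QxP, map_sum]; simp only [map_mul]
    _ = _ := h

lemma mk_Qy :
    Ideal.Quotient.mk (IRV O π m δ hm hδ) (QyP O m δ) =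
      2 * Ideal.Quotient.mk (IRV O π m δ hm hδ) (X (Sum.inr (Sum.inr ⟨δ - 1, by omega⟩))) +
      ∑ t : Fin (δ - 2),
        Ideal.Quotient.mk (IRV O π m δ hm hδ) (X (Sum.inr (Sum.inr ⟨t.val + 1, by omega⟩))) *
        Ideal.Quotient.mk (IRV O π m δ hm hδ)
          (X (Sum.inr (Sum.inr ⟨δ - 2 - t.val, by omega⟩))) := by
  have h := key_sum δ hδ
    (fun j => Ideal.Quotient.mk (IRV O π m δ hm hδ) (X (Sum.inr (Sum.inr j))))
  rw [mk_y1 O π m δ hm hδ, one_mul] at h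
  calc Ideal.Quotient.mk (IRV O π m δ hm hδ) (QyP O m δ)
      = ∑ j : Fin δ, Ideal.Quotient.mk (IRV O π m δ hm hδ) (X (Sum.inr (Sum.inr j))) *
          Ideal.Quotient.mk (IRV O π m δ hm hδ) (X (Sum.inr (Sum.inr j.rev))) := by
        rw [QyP, map_sum]; simp only [map_mul]
    _ = _ := h

include hm hδ in
lemma aeval_genW_Qx :
    MvPolynomial.aeval (genW O π m δ) (QxP O m δ) =
      C (Ideal.Quotient.mk (idealB O π) (X 2)) := by
  have hsum : MvPolynomial.aeval (genW O π m δ) (QxP O m δ)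
      = ∑ j : Fin m, fxW O π m δ j * fxW O π m δ j.rev := by
    rw [QxP, map_sum]
    simp [genW]
  rw [hsum, key_sum m hm (fxW O π m δ)]
  rw [fxW_zero O π m δ (by omega), fxW_last O π m δ (by omega) hm, one_mul]
  have hmid : ∑ t : Fin (m - 2),
      fxW O π m δ ⟨t.val + 1, by omega⟩ * fxW O π m δ ⟨m - 2 - t.val, by omega⟩
      = ∑ t : Fin (m - 2), X (Sum.inl t) * X (Sum.inl t.rev) := by
    refine Finset.sum_congr rfl fun t _ => ?_
    rw [fxW_mid O π m δ (t.val + 1) (by omega) (by omega) (by omega),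
        fxW_mid O π m δ (m - 2 - t.val) (by omega) (by omega) (by omega)]
    have e1 : (⟨t.val + 1 - 1, by omega⟩ : Fin (m - 2)) = t :=
      Fin.ext (show t.val + 1 - 1 = t.val by omega)
    have e2 : (⟨m - 2 - t.val - 1, by omega⟩ : Fin (m - 2)) = t.rev := by
      apply Fin.ext
      show m - 2 - t.val - 1 = t.rev.val
      rw [Fin.val_rev]
      omega
    rw [e1, e2]
  rw [hmid]
  have h2 := two_invOf_W O π m δ
  linear_combination (C (Ideal.Quotient.mk (idealB O π) (X 2)) -
    ∑ t : Fin (m - 2), X (Sum.inl t) * X (Sum.inl t.rev)) * h2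

include hm hδ in
lemma aeval_genW_Qy :
    MvPolynomial.aeval (genW O π m δ) (QyP O m δ) =
      C (Ideal.Quotient.mk (idealB O π) (X 3)) := by
  have hsum : MvPolynomial.aeval (genW O π m δ) (QyP O m δ)
      = ∑ j : Fin δ, fyW O π m δ j * fyW O π m δ j.rev := by
    rw [QyP, map_sum]
    simp [genW]
  rw [hsum, key_sum δ hδ (fyW O π m δ)]
  rw [fyW_zero O π m δ (by omega), fyW_last O π m δ (by omega) hδ, one_mul]
  have hmid : ∑ t : Fin (δ - 2),
      fyW O π m δ ⟨t.val + 1, by omega⟩ * fyW O π m δ ⟨δ - 2 - t.val, by omega⟩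
      = ∑ t : Fin (δ - 2), X (Sum.inr t) * X (Sum.inr t.rev) := by
    refine Finset.sum_congr rfl fun t _ => ?_
    rw [fyW_mid O π m δ (t.val + 1) (by omega) (by omega) (by omega),
        fyW_mid O π m δ (δ - 2 - t.val) (by omega) (by omega) (by omega)]
    have e1 : (⟨t.val + 1 - 1, by omega⟩ : Fin (δ - 2)) = t :=
      Fin.ext (show t.val + 1 - 1 = t.val by omega)
    have e2 : (⟨δ - 2 - t.val - 1, by omega⟩ : Fin (δ - 2)) = t.rev := by
      apply Fin.ext
      show δ - 2 - t.val - 1 = t.rev.val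
      rw [Fin.val_rev]
      omega
    rw [e1, e2]
  rw [hmid]
  have h2 := two_invOf_W O π m δ
  linear_combination (C (Ideal.Quotient.mk (idealB O π) (X 3)) -
    ∑ t : Fin (δ - 2), X (Sum.inr t) * X (Sum.inr t.rev)) * h2

lemma genW_u : genW O π m δ (Sum.inl 0) = C (Ideal.Quotient.mk (idealB O π) (X 0)) := rfl

lemma genW_v : genW O π m δ (Sum.inl 1) = C (Ideal.Quotient.mk (idealB O π) (X 1)) := rfl

include hm hδ in
lemma idealRV_le_ker :
    IRV O π m δ hm hδ ≤ RingHom.ker (MvPolynomial.aeval (genW O π m δ)).toRingHom := by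
  have hb1 : Ideal.Quotient.mk (idealB O π) (X 0 * X 1 - C π) = 0 :=
    Ideal.Quotient.eq_zero_iff_mem.mpr (Ideal.subset_span (Set.mem_insert _ _))
  have hb2 : Ideal.Quotient.mk (idealB O π) (X 0 * X 2 + X 1 * X 3) = 0 :=
    Ideal.Quotient.eq_zero_iff_mem.mpr
      (Ideal.subset_span (Set.mem_insert_of_mem _ (Set.mem_singleton _)))
  refine Ideal.span_le.mpr ?_
  rintro q hq
  simp only [Set.mem_insert_iff, Set.mem_singleton_iff] at hq
  rcases hq with rfl | rfl | rfl | rfl <;>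
    simp only [SetLike.mem_coe, RingHom.mem_ker, AlgHom.toRingHom_eq_coe, RingHom.coe_coe]
  · rw [map_sub, map_mul, aeval_X, aeval_X, aeval_C, genW_u, genW_v,
      MvPolynomial.algebraMap_apply, ← C_mul, ← C_sub, ← map_mul]
    have : algebraMap O (MvPolynomial (Fin 4) O ⧸ idealB O π) π =
        Ideal.Quotient.mk (idealB O π) (C π) := rfl
    rw [this, ← map_sub, hb1, C_0]
  · show (MvPolynomial.aeval (genW O π m δ))
        (X (Sum.inl 0) * QxP O m δ + X (Sum.inl 1) * QyP O m δ) = 0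
    rw [map_add, map_mul, map_mul, aeval_X, aeval_X, genW_u, genW_v,
      aeval_genW_Qx O π m δ hm hδ, aeval_genW_Qy O π m δ hm hδ,
      ← C_mul, ← C_mul, ← C_add, ← map_mul, ← map_mul, ← map_add, hb2, C_0]
  · rw [map_sub, map_one, aeval_X]
    show fxW O π m δ ⟨0, by omega⟩ - 1 = 0
    rw [fxW_zero, sub_self]
  · rw [map_sub, map_one, aeval_X]
    show fyW O π m δ ⟨0, Nat.lt_of_lt_of_le (by decide) hδ⟩ - 1 = 0
    rw [fyW_zero, sub_self]

/-- The map `R_V → W`. -/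
def Fbar : RVq O π m δ hm hδ →ₐ[O]
    MvPolynomial (Fin (m - 2) ⊕ Fin (δ - 2)) (MvPolynomial (Fin 4) O ⧸ idealB O π) :=
  Ideal.Quotient.liftₐ (IRV O π m δ hm hδ) (MvPolynomial.aeval (genW O π m δ))
    (fun a ha => idealRV_le_ker O π m δ hm hδ ha)

lemma Fbar_mk (p : MvPolynomial (Fin 2 ⊕ Fin m ⊕ Fin δ) O) :
    Fbar O π m δ hm hδ (Ideal.Quotient.mk _ p) = MvPolynomial.aeval (genW O π m δ) p := by
  simp [Fbar, Ideal.Quotient.liftₐ_apply]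
  rfl

/-- The map `W → R_V`. -/
def Gw : MvPolynomial (Fin (m - 2) ⊕ Fin (δ - 2)) (MvPolynomial (Fin 4) O ⧸ idealB O π)
    →ₐ[O] RVq O π m δ hm hδ :=
  MvPolynomial.aevalTower (fHom O π m δ hm hδ)
    (Sum.elim
      (fun t : Fin (m - 2) =>
        Ideal.Quotient.mk _ (X (Sum.inr (Sum.inl ⟨t.val + 1, by omega⟩))))
      (fun t : Fin (δ - 2) =>
        Ideal.Quotient.mk _ (X (Sum.inr (Sum.inr ⟨t.val + 1, by omega⟩)))))

lemma Gw_C (b : MvPolynomial (Fin 4) O ⧸ idealB O π) :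
    Gw O π m δ hm hδ (C b) = fHom O π m δ hm hδ b := by
  simp only [Gw, aevalTower_C]

lemma Gw_x (t : Fin (m - 2)) :
    Gw O π m δ hm hδ (X (Sum.inl t)) =
      Ideal.Quotient.mk (IRV O π m δ hm hδ) (X (Sum.inr (Sum.inl ⟨t.val + 1, by omega⟩))) := by
  simp only [Gw, aevalTower_X, Sum.elim_inl]

lemma Gw_y (t : Fin (δ - 2)) :
    Gw O π m δ hm hδ (X (Sum.inr t)) =
      Ideal.Quotient.mk (IRV O π m δ hm hδ) (X (Sum.inr (Sum.inr ⟨t.val + 1, by omega⟩))) := by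
  simp only [Gw, aevalTower_X, Sum.elim_inr]

lemma fHom_u : fHom O π m δ hm hδ (Ideal.Quotient.mk _ (X 0)) =
    Ideal.Quotient.mk (IRV O π m δ hm hδ) (X (Sum.inl 0)) := by
  rw [fHom_mk, aeval_X]; rfl

lemma fHom_v : fHom O π m δ hm hδ (Ideal.Quotient.mk _ (X 1)) =
    Ideal.Quotient.mk (IRV O π m δ hm hδ) (X (Sum.inl 1)) := by
  rw [fHom_mk, aeval_X]; rfl

lemma fHom_S : fHom O π m δ hm hδ (Ideal.Quotient.mk _ (X 2)) =
    Ideal.Quotient.mk (IRV O π m δ hm hδ) (QxP O m δ) := by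
  rw [fHom_mk, aeval_X]; rfl

lemma fHom_T : fHom O π m δ hm hδ (Ideal.Quotient.mk _ (X 3)) =
    Ideal.Quotient.mk (IRV O π m δ hm hδ) (QyP O m δ) := by
  rw [fHom_mk, aeval_X]; rfl

lemma two_invOf_RV :
    (2 : RVq O π m δ hm hδ) * algebraMap O (RVq O π m δ hm hδ) (⅟(2 : O)) = 1 := by
  rw [← map_ofNat (algebraMap O (RVq O π m δ hm hδ)) 2, ← map_mul, mul_invOf_self, map_one]

lemma Gw_fxW (j : Fin m) :
    Gw O π m δ hm hδ (fxW O π m δ j) =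
      Ideal.Quotient.mk (IRV O π m δ hm hδ) (X (Sum.inr (Sum.inl j))) := by
  obtain ⟨jv, hj⟩ := j
  by_cases h0 : jv = 0
  · subst h0
    rw [fxW_zero, map_one]
    exact (mk_x1 O π m δ hm hδ).symm
  by_cases h1 : jv = m - 1
  · subst h1
    rw [fxW_last O π m δ hj hm, map_mul, map_sub, AlgHom.commutes, Gw_C, fHom_S, map_sum]
    have hmid : ∑ t : Fin (m - 2),
        Gw O π m δ hm hδ (X (Sum.inl t) * X (Sum.inl t.rev)) =
        ∑ t : Fin (m - 2),
          Ideal.Quotient.mk (IRV O π m δ hm hδ) (X (Sum.inr (Sum.inl ⟨t.val + 1, by omega⟩))) *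
          Ideal.Quotient.mk (IRV O π m δ hm hδ)
            (X (Sum.inr (Sum.inl ⟨m - 2 - t.val, by omega⟩))) := by
      refine Finset.sum_congr rfl fun t _ => ?_
      rw [map_mul, Gw_x, Gw_x]
      have e2 : (⟨(t.rev).val + 1, by omega⟩ : Fin m) = ⟨m - 2 - t.val, by omega⟩ := by
        apply Fin.ext
        show t.rev.val + 1 = m - 2 - t.val
        rw [Fin.val_rev]
        omega
      rw [e2]
    rw [hmid, mk_Qx O π m δ hm hδ]
    have h2 := two_invOf_RV O π m δ hm hδ
    linear_combination (Ideal.Quotient.mk (IRV O π m δ hm hδ)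
      (X (Sum.inr (Sum.inl ⟨m - 1, by omega⟩)))) * h2
  · rw [fxW_mid O π m δ jv hj h0 h1, Gw_x]
    have e : (⟨(⟨jv - 1, by omega⟩ : Fin (m - 2)).val + 1, by omega⟩ : Fin m) = ⟨jv, hj⟩ := by
      apply Fin.ext
      show jv - 1 + 1 = jv
      omega
    rw [e]

lemma Gw_fyW (j : Fin δ) :
    Gw O π m δ hm hδ (fyW O π m δ j) =
      Ideal.Quotient.mk (IRV O π m δ hm hδ) (X (Sum.inr (Sum.inr j))) := by
  obtain ⟨jv, hj⟩ := j
  by_cases h0 : jv = 0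
  · subst h0
    rw [fyW_zero, map_one]
    exact (mk_y1 O π m δ hm hδ).symm
  by_cases h1 : jv = δ - 1
  · subst h1
    rw [fyW_last O π m δ hj hδ, map_mul, map_sub, AlgHom.commutes, Gw_C, fHom_T, map_sum]
    have hmid : ∑ t : Fin (δ - 2),
        Gw O π m δ hm hδ (X (Sum.inr t) * X (Sum.inr t.rev)) =
        ∑ t : Fin (δ - 2),
          Ideal.Quotient.mk (IRV O π m δ hm hδ) (X (Sum.inr (Sum.inr ⟨t.val + 1, by omega⟩))) *
          Ideal.Quotient.mk (IRV O π m δ hm hδ)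
            (X (Sum.inr (Sum.inr ⟨δ - 2 - t.val, by omega⟩))) := by
      refine Finset.sum_congr rfl fun t _ => ?_
      rw [map_mul, Gw_y, Gw_y]
      have e2 : (⟨(t.rev).val + 1, by omega⟩ : Fin δ) = ⟨δ - 2 - t.val, by omega⟩ := by
        apply Fin.ext
        show t.rev.val + 1 = δ - 2 - t.val
        rw [Fin.val_rev]
        omega
      rw [e2]
    rw [hmid, mk_Qy O π m δ hm hδ]
    have h2 := two_invOf_RV O π m δ hm hδ
    linear_combination (Ideal.Quotient.mk (IRV O π m δ hm hδ)
      (X (Sum.inr (Sum.inr ⟨δ - 1, by omega⟩)))) * h2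
  · rw [fyW_mid O π m δ jv hj h0 h1, Gw_y]
    have e : (⟨(⟨jv - 1, by omega⟩ : Fin (δ - 2)).val + 1, by omega⟩ : Fin δ) = ⟨jv, hj⟩ := by
      apply Fin.ext
      show jv - 1 + 1 = jv
      omega
    rw [e]

lemma Gw_comp_Fbar :
    (Gw O π m δ hm hδ).comp (Fbar O π m δ hm hδ) = AlgHom.id O (RVq O π m δ hm hδ) := by
  apply Ideal.Quotient.algHom_ext
  apply MvPolynomial.algHom_ext
  intro s
  simp only [AlgHom.comp_apply, Ideal.Quotient.mkₐ_eq_mk, AlgHom.id_apply]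
  rw [Fbar_mk, aeval_X]
  cases s with
  | inl i =>
    fin_cases i
    · show Gw O π m δ hm hδ (genW O π m δ (Sum.inl 0)) =
        Ideal.Quotient.mk (IRV O π m δ hm hδ) (X (Sum.inl 0))
      rw [genW_u, Gw_C, fHom_u]
    · show Gw O π m δ hm hδ (genW O π m δ (Sum.inl 1)) =
        Ideal.Quotient.mk (IRV O π m δ hm hδ) (X (Sum.inl 1))
      rw [genW_v, Gw_C, fHom_v]
  | inr s =>
    cases s with
    | inl j => exact Gw_fxW O π m δ hm hδ j
    | inr j => exact Gw_fyW O π m δ hm hδ j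

lemma Fbar_fHom (b : MvPolynomial (Fin 4) O ⧸ idealB O π) :
    Fbar O π m δ hm hδ (fHom O π m δ hm hδ b) = C b := by
  have key : (Fbar O π m δ hm hδ).comp (fHom O π m δ hm hδ) =
      IsScalarTower.toAlgHom O (MvPolynomial (Fin 4) O ⧸ idealB O π)
        (MvPolynomial (Fin (m - 2) ⊕ Fin (δ - 2)) (MvPolynomial (Fin 4) O ⧸ idealB O π)) := by
    apply Ideal.Quotient.algHom_ext
    apply MvPolynomial.algHom_ext
    intro i
    simp only [AlgHom.comp_apply, Ideal.Quotient.mkₐ_eq_mk, IsScalarTower.coe_toAlgHom']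
    rw [MvPolynomial.algebraMap_eq]
    fin_cases i
    · show Fbar O π m δ hm hδ (fHom O π m δ hm hδ (Ideal.Quotient.mk _ (X 0))) =
        C (Ideal.Quotient.mk (idealB O π) (X 0))
      rw [fHom_u, Fbar_mk, aeval_X, genW_u]
    · show Fbar O π m δ hm hδ (fHom O π m δ hm hδ (Ideal.Quotient.mk _ (X 1))) =
        C (Ideal.Quotient.mk (idealB O π) (X 1))
      rw [fHom_v, Fbar_mk, aeval_X, genW_v]
    · show Fbar O π m δ hm hδ (fHom O π m δ hm hδ (Ideal.Quotient.mk _ (X 2))) =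
        C (Ideal.Quotient.mk (idealB O π) (X 2))
      rw [fHom_S, Fbar_mk, aeval_genW_Qx O π m δ hm hδ]
    · show Fbar O π m δ hm hδ (fHom O π m δ hm hδ (Ideal.Quotient.mk _ (X 3))) =
        C (Ideal.Quotient.mk (idealB O π) (X 3))
      rw [fHom_T, Fbar_mk, aeval_genW_Qy O π m δ hm hδ]
  have := congrArg (fun g => g b) (congrArg (fun h => h.toFun) key)
  simpa [MvPolynomial.algebraMap_eq] using congrFun (congrArg DFunLike.coe key) b

lemma Fbar_comp_Gw :
    (Fbar O π m δ hm hδ).comp (Gw O π m δ hm hδ) =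
      AlgHom.id O (MvPolynomial (Fin (m - 2) ⊕ Fin (δ - 2))
        (MvPolynomial (Fin 4) O ⧸ idealB O π)) := by
  apply MvPolynomial.algHom_ext'
  · ext b
    simp only [AlgHom.comp_apply, IsScalarTower.coe_toAlgHom', MvPolynomial.algebraMap_eq,
      AlgHom.id_apply]
    rw [Gw_C, Fbar_fHom]
  · intro t
    simp only [AlgHom.comp_apply, AlgHom.id_apply]
    cases t with
    | inl t =>
      rw [Gw_x, Fbar_mk, aeval_X]
      show fxW O π m δ ⟨t.val + 1, by omega⟩ = X (Sum.inl t)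
      rw [fxW_mid O π m δ (t.val + 1) (by omega) (by omega) (by omega)]
      congr 1
    | inr t =>
      rw [Gw_y, Fbar_mk, aeval_X]
      show fyW O π m δ ⟨t.val + 1, by omega⟩ = X (Sum.inr t)
      rw [fyW_mid O π m δ (t.val + 1) (by omega) (by omega) (by omega)]
      congr 1

include hm hδ in
theorem master :
    ∃ f : (MvPolynomial (Fin 4) O ⧸ idealB O π) →ₐ[O]
        (MvPolynomial (Fin 2 ⊕ Fin m ⊕ Fin δ) O ⧸ idealRV O π m δ (by omega) (Nat.lt_of_lt_of_le (by decide) hδ)),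
      f (Ideal.Quotient.mk (idealB O π) (X 0)) =
        Ideal.Quotient.mk (idealRV O π m δ (by omega) (Nat.lt_of_lt_of_le (by decide) hδ)) (X (Sum.inl 0)) ∧
      f (Ideal.Quotient.mk (idealB O π) (X 1)) =
        Ideal.Quotient.mk (idealRV O π m δ (by omega) (Nat.lt_of_lt_of_le (by decide) hδ)) (X (Sum.inl 1)) ∧
      f (Ideal.Quotient.mk (idealB O π) (X 2)) =
        Ideal.Quotient.mk (idealRV O π m δ (by omega) (Nat.lt_of_lt_of_le (by decide) hδ))
          (∑ j : Fin m, X (Sum.inr (Sum.inl j)) * X (Sum.inr (Sum.inl j.rev))) ∧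
      f (Ideal.Quotient.mk (idealB O π) (X 3)) =
        Ideal.Quotient.mk (idealRV O π m δ (by omega) (Nat.lt_of_lt_of_le (by decide) hδ))
          (∑ i : Fin δ, X (Sum.inr (Sum.inr i)) * X (Sum.inr (Sum.inr i.rev))) ∧
      @Algebra.Smooth _ _ _ _ f.toRingHom.toAlgebra := by
  refine ⟨fHom O π m δ hm hδ, fHom_u O π m δ hm hδ, fHom_v O π m δ hm hδ,
    fHom_S O π m δ hm hδ, fHom_T O π m δ hm hδ, ?_⟩
  letI : Algebra (MvPolynomial (Fin 4) O ⧸ idealB O π) (RVq O π m δ hm hδ) :=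
    (fHom O π m δ hm hδ).toRingHom.toAlgebra
  let e : MvPolynomial (Fin (m - 2) ⊕ Fin (δ - 2)) (MvPolynomial (Fin 4) O ⧸ idealB O π)
      ≃ₐ[O] RVq O π m δ hm hδ :=
    AlgEquiv.ofAlgHom (Gw O π m δ hm hδ) (Fbar O π m δ hm hδ)
      (Gw_comp_Fbar O π m δ hm hδ) (Fbar_comp_Gw O π m δ hm hδ)
  let e' : MvPolynomial (Fin (m - 2) ⊕ Fin (δ - 2)) (MvPolynomial (Fin 4) O ⧸ idealB O π)
      ≃ₐ[MvPolynomial (Fin 4) O ⧸ idealB O π] RVq O π m δ hm hδ :=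
    AlgEquiv.ofRingEquiv (f := e.toRingEquiv) (fun b => by
      show Gw O π m δ hm hδ (algebraMap _ _ b) = _
      rw [MvPolynomial.algebraMap_eq, Gw_C]
      rfl)
  haveI hfs : Algebra.FormallySmooth (MvPolynomial (Fin 4) O ⧸ idealB O π)
      (MvPolynomial (Fin (m - 2) ⊕ Fin (δ - 2)) (MvPolynomial (Fin 4) O ⧸ idealB O π)) :=
    inferInstance
  haveI hsm : Algebra.Smooth (MvPolynomial (Fin 4) O ⧸ idealB O π)
      (MvPolynomial (Fin (m - 2) ⊕ Fin (δ - 2)) (MvPolynomial (Fin 4) O ⧸ idealB O π)) :=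
    ⟨hfs, inferInstance⟩
  exact @Algebra.Smooth.of_equiv _ _ _ _ _ _ _ _ hsm e'

end Aux

/-- the assignment `u ↦ u`, `v ↦ v`, `S ↦ Q_m(x₁,…,x_m)`,
`T ↦ Q_δ(y₁,…,y_δ)` defines a well-defined `O`-algebra homomorphism `B → R_V`, and this
homomorphism is smooth (formally smooth and of finite presentation). -/
theorem stmt_19 (O : Type*) [CommRing O] [IsDomain O] [IsDiscreteValuationRing O]
    [IsAdicComplete (IsLocalRing.maximalIdeal O) O]
    (p : ℕ) [Fact p.Prime] (hp : p ≠ 2)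
    [IsAlgClosed (IsLocalRing.ResidueField O)] [CharP (IsLocalRing.ResidueField O) p]
    [Invertible (2 : O)]
    (π : O) (hπ : Irreducible π)
    (d δ : ℕ) (hd : 5 ≤ d) (hδ1 : 2 ≤ δ) (hδ2 : δ ≤ d - δ) :
    ∃ f : (MvPolynomial (Fin 4) O ⧸ idealB O π) →ₐ[O]
        (MvPolynomial (Fin 2 ⊕ Fin (d - δ) ⊕ Fin δ) O ⧸
          idealRV O π (d - δ) δ (by omega) (by omega)),
      -- `u ↦ u`
      f (Ideal.Quotient.mk (idealB O π) (X 0)) =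
        Ideal.Quotient.mk (idealRV O π (d - δ) δ (by omega) (by omega))
          (X (Sum.inl 0)) ∧
      -- `v ↦ v`
      f (Ideal.Quotient.mk (idealB O π) (X 1)) =
        Ideal.Quotient.mk (idealRV O π (d - δ) δ (by omega) (by omega))
          (X (Sum.inl 1)) ∧
      -- `S ↦ Q_m(x₁,…,x_m)`
      f (Ideal.Quotient.mk (idealB O π) (X 2)) =
        Ideal.Quotient.mk (idealRV O π (d - δ) δ (by omega) (by omega))
          (∑ j : Fin (d - δ), X (Sum.inr (Sum.inl j)) * X (Sum.inr (Sum.inl j.rev))) ∧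
      -- `T ↦ Q_δ(y₁,…,y_δ)`
      f (Ideal.Quotient.mk (idealB O π) (X 3)) =
        Ideal.Quotient.mk (idealRV O π (d - δ) δ (by omega) (by omega))
          (∑ i : Fin δ, X (Sum.inr (Sum.inr i)) * X (Sum.inr (Sum.inr i.rev))) ∧
      -- and this homomorphism is smooth
      @Algebra.Smooth _ _ _ _ f.toRingHom.toAlgebra := by
  exact master O π (d - δ) δ (by omega) hδ1
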